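/- arXiv:1507.04717 — 4 statements merged into one kernel-verified Lean document; each statement's English description precedes it below -/
import Mathlib

section
/- Let H, K be separable Hilbert spaces, Z : H → K a bounded linear operator, and P the orthogonal projection onto the closure of the range of Z*. Then for any separable Hilbert space F, bounded operator X : F → H, and λ > 0, ‖(I − P) X‖ ≤ √λ · ‖(Z*Z + λ I)^{-1/2} X‖. -/
/-!
Write `Q = 1 - P`. Since `ran Z* ⊆ ran P`, we get `Z Q = 0`, so `(Z*Z + λ) Q = λ Q` and hence
`Q = λ T² Q = λ Q T²` (the second form by taking adjoints). The C*-identity gives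
`‖Q T‖² = ‖Q T² Q‖ = λ⁻¹ ‖Q‖ ≤ λ⁻¹`, and therefore `‖Q X‖ = λ ‖(Q T)(T X)‖ ≤ √λ ‖T X‖`.
-/

open ContinuousLinearMap

section CStar

variable {𝕜 A : Type*} [RCLike 𝕜] [NormedRing A] [StarRing A] [NormedAlgebra 𝕜 A]

theorem IsStarProjection.norm_mul_le_of_eq_smul [CStarRing A] {q t : A} (hq : IsStarProjection q)
    (ht : IsSelfAdjoint t) {c : ℝ} (hc : 0 < c) (h : q = (c : 𝕜) • (t * t * q)) :
    ‖q * t‖ ≤ (√c)⁻¹ := by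
  have hqttq : q * t * t * q = (c : 𝕜)⁻¹ • q := by
    refine ((inv_smul_eq_iff₀ (RCLike.ofReal_ne_zero.mpr hc.ne')).mpr ?_).symm
    conv_lhs => rw [← hq.isIdempotentElem.eq]
    nth_rw 2 [h]
    rw [mul_smul_comm]
    simp only [mul_assoc]
  have hsq : ‖q * t‖ ^ 2 ≤ c⁻¹ := by
    rw [sq, ← CStarRing.norm_self_mul_star, star_mul, ht.star_eq, hq.isSelfAdjoint.star_eq,
      ← mul_assoc, hqttq, norm_smul, ← RCLike.ofReal_inv, RCLike.norm_ofReal,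
      abs_of_pos (inv_pos.mpr hc)]
    exact mul_le_of_le_one_right (inv_pos.mpr hc).le (hq.norm_le q)
  rw [← Real.sqrt_inv]
  exact Real.le_sqrt_of_sq_le hsq

theorem IsStarProjection.eq_smul_mul_mul_self_of_eq_smul [StarModule 𝕜 A] {q t : A}
    (hq : IsStarProjection q) (ht : IsSelfAdjoint t) {c : ℝ} (h : q = (c : 𝕜) • (t * t * q)) :
    q = (c : 𝕜) • (q * t * t) := by
  simpa [star_smul, star_mul, ht.star_eq, hq.isSelfAdjoint.star_eq, mul_assoc] using congr(star $h)

end CStar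

section Hilbert

variable {𝕜 H K F : Type*} [RCLike 𝕜]
  [NormedAddCommGroup H] [InnerProductSpace 𝕜 H] [CompleteSpace H]
  [NormedAddCommGroup K] [InnerProductSpace 𝕜 K] [CompleteSpace K]
  [NormedAddCommGroup F] [NormedSpace 𝕜 F]

theorem ContinuousLinearMap.comp_one_sub_eq_zero_of_range_adjoint_le {Z : H →L[𝕜] K}
    {P : H →L[𝕜] H} (hP : IsStarProjection P)
    (h : LinearMap.range (adjoint Z : K →ₗ[𝕜] H) ≤ LinearMap.range (P : H →ₗ[𝕜] H)) :
    Z ∘L (1 - P) = 0 := by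
  refine adjoint.injective ?_
  rw [adjoint_comp, ← star_eq_adjoint, hP.one_sub.isSelfAdjoint.star_eq, map_zero]
  ext y
  obtain ⟨x, hx⟩ := h (LinearMap.mem_range_self _ y)
  have hx : P x = adjoint Z y := hx
  simpa [← hx] using congr($(hP.one_sub_mul_self) x)

theorem ContinuousLinearMap.eq_smul_mul_self_mul_of_comp_eq_zero {Z : H →L[𝕜] K}
    {T Q : H →L[𝕜] H} {c : 𝕜} (hT : (T * T) * (adjoint Z ∘L Z + c • 1) = 1)
    (hZQ : Z ∘L Q = 0) : Q = c • (T * T * Q) := by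
  have hQ : (adjoint Z ∘L Z + c • 1) * Q = c • Q := by
    rw [add_mul, mul_def, comp_assoc, hZQ, comp_zero, zero_add, smul_mul_assoc, one_mul]
  rw [← mul_smul_comm, ← hQ, ← mul_assoc, hT, one_mul]

theorem ContinuousLinearMap.norm_comp_le_sqrt_mul_norm_comp {Q T : H →L[𝕜] H}
    (hQ : IsStarProjection Q) (hT : IsSelfAdjoint T) {c : ℝ} (hc : 0 < c)
    (h : Q = (c : 𝕜) • (T * T * Q)) (X : F →L[𝕜] H) :
    ‖Q ∘L X‖ ≤ √c * ‖T ∘L X‖ := by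
  have hQX : Q ∘L X = (c : 𝕜) • ((Q * T) ∘L (T ∘L X)) := by
    conv_lhs => rw [hQ.eq_smul_mul_mul_self_of_eq_smul hT h]
    rfl
  calc ‖Q ∘L X‖ ≤ c * (‖Q * T‖ * ‖T ∘L X‖) := by
        rw [hQX, norm_smul, RCLike.norm_ofReal, abs_of_pos hc]
        gcongr
        exact opNorm_comp_le _ _
    _ ≤ c * ((√c)⁻¹ * ‖T ∘L X‖) := by
        gcongr
        exact hQ.norm_mul_le_of_eq_smul hT hc h
    _ = √c * ‖T ∘L X‖ := by
        rw [← mul_assoc, ← div_eq_mul_inv, Real.div_sqrt]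

end Hilbert

theorem norm_one_sub_proj_comp_le_general
    {H K F : Type*}
    [NormedAddCommGroup H] [InnerProductSpace ℂ H] [CompleteSpace H]
    [NormedAddCommGroup K] [InnerProductSpace ℂ K] [CompleteSpace K]
    [NormedAddCommGroup F] [InnerProductSpace ℂ F]
    (Z : H →L[ℂ] K) (P : H →L[ℂ] H)
    -- `P` is the orthogonal projection onto the closure of `ran Z*`
    (hPidem : IsIdempotentElem P) (hPsa : IsSelfAdjoint P)
    (hPran : LinearMap.range (P : H →ₗ[ℂ] H) = (LinearMap.range ((adjoint Z : K →L[ℂ] H) : K →ₗ[ℂ] H)).topologicalClosure)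
    (lam : ℝ) (hlam : 0 < lam)
    -- `T` is the inverse square root of `Z*Z + λI`: positive, and `T²` inverts `Z*Z + λI`
    (T : H →L[ℂ] H) (hT : T.IsPositive)
    (hTl : (T * T) * (adjoint Z ∘L Z + (lam : ℂ) • 1) = 1) :
    ∀ X : F →L[ℂ] H, ‖(1 - P) ∘L X‖ ≤ Real.sqrt lam * ‖T ∘L X‖ := by
  have hP : IsStarProjection P := ⟨hPidem, hPsa⟩
  have hZ : Z ∘L (1 - P) = 0 :=
    comp_one_sub_eq_zero_of_range_adjoint_le hP (hPran ▸ Submodule.le_topologicalClosure _)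
  exact norm_comp_le_sqrt_mul_norm_comp hP.one_sub hT.isSelfAdjoint hlam
    (eq_smul_mul_self_mul_of_comp_eq_zero hTl hZ)

/-- If `P` is the orthogonal projection onto the closure of the range of `Z*` and `T` is the
inverse square root of `Z*Z + λI`, then `‖(I - P) ∘ X‖ ≤ √λ · ‖T ∘ X‖`. -/
theorem norm_one_sub_proj_comp_le
    {H K F : Type*}
    [NormedAddCommGroup H] [InnerProductSpace ℂ H] [CompleteSpace H]
    [NormedAddCommGroup K] [InnerProductSpace ℂ K] [CompleteSpace K]
    [NormedAddCommGroup F] [InnerProductSpace ℂ F] [CompleteSpace F]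
    (Z : H →L[ℂ] K) (P : H →L[ℂ] H)
    -- `P` is the orthogonal projection onto the closure of `ran Z*`
    (hPidem : IsIdempotentElem P) (hPsa : IsSelfAdjoint P)
    (hPran : LinearMap.range (P : H →ₗ[ℂ] H) = (LinearMap.range ((adjoint Z : K →L[ℂ] H) : K →ₗ[ℂ] H)).topologicalClosure)
    (lam : ℝ) (hlam : 0 < lam)
    -- `T` is the inverse square root of `Z*Z + λI`: positive, and `T²` inverts `Z*Z + λI`
    (T : H →L[ℂ] H) (hT : T.IsPositive)
    (hTl : (T * T) * (adjoint Z ∘L Z + (lam : ℂ) • 1) = 1)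
    (hTr : (adjoint Z ∘L Z + (lam : ℂ) • 1) * (T * T) = 1) :
    ∀ X : F →L[ℂ] H, ‖(1 - P) ∘L X‖ ≤ Real.sqrt lam * ‖T ∘L X‖ :=
  norm_one_sub_proj_comp_le_general Z P hPidem hPsa hPran lam hlam T hT hTl
end

section
/- Let Z : H → K be a bounded linear operator between Hilbert spaces, with P the orthogonal projection onto the closure of the range of Z*, and λ > 0. Then P − Z*(ZZ* + λI)^{-1}Z is a positive operator. -/
/-!
With `u = B (Z x)` and `v = Z* u`, the equation `(ZZ* + λ) u = Z x` gives
`⟪Z* B Z x, x⟫ = ‖v‖² + λ‖u‖²`, a real number bounded by `‖v‖ ‖x‖` (Cauchy–Schwarz); hence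
`‖v‖ ≤ ‖x‖` and `1 - Z* B Z` is positive. As the range of `Z*` lies in the range of `P`, we have
`P Z* = Z*` and `Z P = Z`, so `P - Z* B Z = P (1 - Z* B Z) P` is positive as well.
-/

open ContinuousLinearMap

theorem ContinuousLinearMap.IsIdempotentElem.comp_eq_self_of_range_le
    {R M N : Type*} [Semiring R] [TopologicalSpace M] [AddCommMonoid M] [Module R M]
    [TopologicalSpace N] [AddCommMonoid N] [Module R N]
    {p : M →L[R] M} (hp : IsIdempotentElem p) {T : N →L[R] M}
    (hT : LinearMap.range (T : N →ₗ[R] M) ≤ LinearMap.range (p : M →ₗ[R] M)) :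
    p ∘L T = T := by
  ext x
  exact (LinearMap.IsIdempotentElem.mem_range_iff hp.toLinearMap).mp (hT ⟨x, rfl⟩)

section

variable {𝕜 E F : Type*} [RCLike 𝕜]
  [NormedAddCommGroup E] [InnerProductSpace 𝕜 E] [CompleteSpace E]
  [NormedAddCommGroup F] [InnerProductSpace 𝕜 F] [CompleteSpace F]

theorem ContinuousLinearMap.comp_eq_self_of_range_adjoint_le {Z : E →L[𝕜] F} {P : E →L[𝕜] E}
    (hPidem : IsIdempotentElem P) (hPsa : IsSelfAdjoint P)
    (hran : LinearMap.range (adjoint Z : F →ₗ[𝕜] E) ≤ LinearMap.range (P : E →ₗ[𝕜] E)) :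
    Z ∘L P = Z := by
  rw [← adjoint_adjoint (Z ∘L P), adjoint_comp, hPsa.adjoint_eq,
    IsIdempotentElem.comp_eq_self_of_range_le hPidem hran, adjoint_adjoint]

theorem ContinuousLinearMap.inner_adjoint_comp_comp_apply_self
    {Z : E →L[𝕜] F} {B : F →L[𝕜] F} {lam : ℝ}
    (hB : (Z ∘L adjoint Z + (lam : 𝕜) • 1) * B = 1) (x : E) :
    inner 𝕜 ((adjoint Z ∘L B ∘L Z) x) x
      = ((‖adjoint Z (B (Z x))‖ ^ 2 + lam * ‖B (Z x)‖ ^ 2 : ℝ) : 𝕜) := by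
  set u := B (Z x)
  have hZx : Z (adjoint Z u) + (lam : 𝕜) • u = Z x := by
    simpa using congr($hB (Z x))
  calc inner 𝕜 ((adjoint Z ∘L B ∘L Z) x) x = inner 𝕜 u (Z x) := adjoint_inner_left Z x u
    _ = inner 𝕜 (adjoint Z u) (adjoint Z u) + (lam : 𝕜) * inner 𝕜 u u := by
      rw [← hZx, inner_add_right, inner_smul_right, ← adjoint_inner_left Z (adjoint Z u) u]
    _ = _ := by
      simp only [inner_self_eq_norm_sq_to_K]
      push_cast
      ring

end

theorem ContinuousLinearMap.isPositive_one_sub_adjoint_comp_comp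
    {H K : Type*}
    [NormedAddCommGroup H] [InnerProductSpace ℂ H] [CompleteSpace H]
    [NormedAddCommGroup K] [InnerProductSpace ℂ K] [CompleteSpace K]
    {Z : H →L[ℂ] K} {B : K →L[ℂ] K}
    {lam : ℝ} (hlam : 0 ≤ lam) (hB : (Z ∘L adjoint Z + (lam : ℂ) • 1) * B = 1) :
    (1 - adjoint Z ∘L B ∘L Z).IsPositive := by
  rw [isPositive_iff_complex]
  intro x
  have hquad := inner_adjoint_comp_comp_apply_self hB x
  have hcs := re_inner_le_norm (𝕜 := ℂ) ((adjoint Z ∘L B ∘L Z) x) x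
  rw [hquad, RCLike.ofReal_re, comp_apply, comp_apply] at hcs
  rw [sub_apply, one_apply_eq_self, inner_sub_left, hquad, inner_self_eq_norm_sq_to_K,
    ← RCLike.ofReal_pow, ← RCLike.ofReal_sub, RCLike.ofReal_re]
  refine ⟨rfl, ?_⟩
  nlinarith [mul_nonneg hlam (sq_nonneg ‖B (Z x)‖), norm_nonneg (adjoint Z (B (Z x))),
    norm_nonneg x]

theorem proj_sub_adjoint_inv_isPositive_general
    {H K : Type*}
    [NormedAddCommGroup H] [InnerProductSpace ℂ H] [CompleteSpace H]
    [NormedAddCommGroup K] [InnerProductSpace ℂ K] [CompleteSpace K]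
    (Z : H →L[ℂ] K) (P : H →L[ℂ] H)
    (hPidem : IsIdempotentElem P) (hPsa : IsSelfAdjoint P)
    (hPran : LinearMap.range (P : H →ₗ[ℂ] H) = (LinearMap.range ((adjoint Z : K →L[ℂ] H) : K →ₗ[ℂ] H)).topologicalClosure)
    (lam : ℝ) (hlam : 0 < lam)
    -- `B = (ZZ* + λI)⁻¹`
    (B : K →L[ℂ] K)
    (hBr : (Z ∘L adjoint Z + (lam : ℂ) • 1) * B = 1) :
    (P - adjoint Z ∘L B ∘L Z).IsPositive := by
  have hran := hPran ▸ Submodule.le_topologicalClosure _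
  have hPZ : P ∘L adjoint Z = adjoint Z := hPidem.comp_eq_self_of_range_le hran
  have hZP : Z ∘L P = Z := comp_eq_self_of_range_adjoint_le hPidem hPsa hran
  have hconj :
      P - adjoint Z ∘L B ∘L Z = P ∘L (1 - adjoint Z ∘L B ∘L Z) ∘L adjoint P := by
    rw [hPsa.adjoint_eq, sub_comp, comp_sub, one_def, id_comp, ← mul_def, hPidem.eq]
    congr 1
    simp only [comp_assoc, hZP]
    rw [← comp_assoc P, hPZ]
  rw [hconj]
  exact (isPositive_one_sub_adjoint_comp_comp hlam.le hBr).conj_adjoint P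

/-- If `P` is the orthogonal projection onto the closure of the range of `Z*`, then
`P − Z*(ZZ* + λI)⁻¹Z` is a positive operator. -/
theorem proj_sub_adjoint_inv_isPositive
    {H K : Type*}
    [NormedAddCommGroup H] [InnerProductSpace ℂ H] [CompleteSpace H]
    [NormedAddCommGroup K] [InnerProductSpace ℂ K] [CompleteSpace K]
    (Z : H →L[ℂ] K) (P : H →L[ℂ] H)
    (hPidem : IsIdempotentElem P) (hPsa : IsSelfAdjoint P)
    (hPran : LinearMap.range (P : H →ₗ[ℂ] H) = (LinearMap.range ((adjoint Z : K →L[ℂ] H) : K →ₗ[ℂ] H)).topologicalClosure)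
    (lam : ℝ) (hlam : 0 < lam)
    -- `B = (ZZ* + λI)⁻¹`
    (B : K →L[ℂ] K)
    (hBl : B * (Z ∘L adjoint Z + (lam : ℂ) • 1) = 1)
    (hBr : (Z ∘L adjoint Z + (lam : ℂ) • 1) * B = 1) :
    (P - adjoint Z ∘L B ∘L Z).IsPositive :=
  proj_sub_adjoint_inv_isPositive_general Z P hPidem hPsa hPran lam hlam B hBr
end

section
/- Let A, B be bounded self-adjoint positive operators on a separable Hilbert space and λ > 0. If β := sup of the spectrum of (B + λI)^{-1/2}(B − A)(B + λI)^{-1/2} satisfies β < 1, then ‖(A + λI)^{-1/2}(B + λI)^{1/2}‖ ≤ (1 − β)^{-1/2}. -/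
/-!
Write `Aλ = A + λ` and `Bλ = B + λ = Sb²`. The spectral bound `T (B - A) T ≤ β` is undone
by the congruence with `Bλ T`, which inverts `T` on both sides, and becomes `B - A ≤ β Bλ`,
that is `(1 - β) Bλ ≤ Aλ`. Conjugating by `Sa` and using `Sa Aλ Sa = 1` gives
`(Sa Sb) (Sa Sb)⋆ = Sa Bλ Sa ≤ (1 - β)⁻¹`, and the C⋆-identity turns this into the norm bound.
-/

section Monoid

variable {M : Type*} [Monoid M]

theorem commute_of_mul_self_mul_eq_one {t b : M} (hl : t * t * b = 1) (hr : b * (t * t) = 1) :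
    Commute t b :=
  calc t * b = b * (t * t) * (t * b) := by rw [hr, one_mul]
    _ = b * t * (t * t * b) := by simp only [mul_assoc]
    _ = b * t := by rw [hl, mul_one]

theorem mul_mul_eq_one_of_mul_self_mul_eq_one {t b : M} (hl : t * t * b = 1)
    (hr : b * (t * t) = 1) : t * b * t = 1 := by
  rw [(commute_of_mul_self_mul_eq_one hl hr).eq, mul_assoc, hr]

end Monoid

section StarOrderedRing

variable {R : Type*} [Ring R] [PartialOrder R] [StarRing R] [StarOrderedRing R] [Algebra ℝ R]

theorem le_smul_of_conjugate_le_algebraMap {t b d : R} {r : ℝ} (ht : IsSelfAdjoint t)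
    (hb : IsSelfAdjoint b) (hl : t * t * b = 1) (hr : b * (t * t) = 1)
    (h : t * d * t ≤ algebraMap ℝ R r) : d ≤ r • b := by
  have htbt : t * b * t = 1 := mul_mul_eq_one_of_mul_self_mul_eq_one hl hr
  have hs : IsSelfAdjoint (b * t) := by
    rw [IsSelfAdjoint, star_mul, ht.star_eq, hb.star_eq, (commute_of_mul_self_mul_eq_one hl hr).eq]
  have hd : b * t * (t * d * t) * (b * t) = d :=
    calc b * t * (t * d * t) * (b * t) = b * (t * t) * d * (t * b * t) := by
          simp only [mul_assoc]
      _ = d := by rw [hr, htbt, one_mul, mul_one]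
  have hscalar : b * t * algebraMap ℝ R r * (b * t) = r • b :=
    calc b * t * algebraMap ℝ R r * (b * t) = r • (b * (t * b * t)) := by
          rw [Algebra.algebraMap_eq_smul_one, mul_smul_comm, mul_one, smul_mul_assoc]
          simp only [mul_assoc]
      _ = r • b := by rw [htbt, mul_one]
  simpa only [hd, hscalar] using hs.conjugate_le_conjugate h

end StarOrderedRing

section CStarAlgebra

variable {A : Type*} [CStarAlgebra A] [PartialOrder A] [StarOrderedRing A]

theorem IsSelfAdjoint.le_algebraMap_sSup_spectrum {a : A} (ha : IsSelfAdjoint a) :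
    a ≤ algebraMap ℝ A (sSup (spectrum ℝ a)) :=
  le_algebraMap_of_spectrum_le (fun _ hx ↦ le_csSup (spectrum.isCompact a).bddAbove hx) ha

theorem CStarAlgebra.sq_norm_le_of_mul_star_le_algebraMap {x : A} {r : ℝ} (hr : 0 ≤ r)
    (h : x * star x ≤ algebraMap ℝ A r) : ‖x‖ ^ 2 ≤ r := by
  rw [sq, ← CStarRing.norm_self_mul_star]
  exact (CStarAlgebra.norm_le_iff_le_algebraMap _ hr (mul_star_self_nonneg x)).2 h

end CStarAlgebra

theorem norm_invSqrt_mul_sqrt_le_general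
    {H : Type*} [NormedAddCommGroup H] [InnerProductSpace ℂ H] [CompleteSpace H]
    (A B : H →L[ℂ] H) (hA : A.IsPositive) (hB : B.IsPositive)
    (lam : ℝ)
    -- `Sa = (A + λI)^{-1/2}`: positive, and `Sa²` inverts `A + λI`
    (Sa : H →L[ℂ] H) (hSa : Sa.IsPositive)
    (hSal : (Sa * Sa) * (A + (lam : ℂ) • 1) = 1)
    (hSar : (A + (lam : ℂ) • 1) * (Sa * Sa) = 1)
    -- `Sb = (B + λI)^{1/2}`: positive square root
    (Sb : H →L[ℂ] H) (hSb : Sb.IsPositive)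
    (hSb2 : Sb * Sb = B + (lam : ℂ) • 1)
    -- `T = (B + λI)^{-1/2}`: positive, and `T²` inverts `B + λI`
    (T : H →L[ℂ] H) (hT : T.IsPositive)
    (hTl : (T * T) * (B + (lam : ℂ) • 1) = 1)
    (hTr : (B + (lam : ℂ) • 1) * (T * T) = 1)
    (beta : ℝ) (hbeta : beta = sSup (spectrum ℝ (T * (B - A) * T)))
    (hbeta1 : beta < 1) :
    ‖Sa * Sb‖ ≤ (Real.sqrt (1 - beta))⁻¹ := by
  set Al := A + (lam : ℂ) • (1 : H →L[ℂ] H)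
  set Bl := B + (lam : ℂ) • (1 : H →L[ℂ] H)
  have hBl : IsSelfAdjoint Bl := hB.isSelfAdjoint.add <| by simp [IsSelfAdjoint, star_smul]
  have hC : T * (B - A) * T ≤ algebraMap ℝ _ beta := hbeta ▸
    ((hB.isSelfAdjoint.sub hA.isSelfAdjoint).conjugate_self
      hT.isSelfAdjoint).le_algebraMap_sSup_spectrum
  have hBA : B - A ≤ beta • Bl :=
    le_smul_of_conjugate_le_algebraMap hT.isSelfAdjoint hBl hTl hTr hC
  have hgap : 0 < 1 - beta := sub_pos.2 hbeta1
  have hAl : (1 - beta) • Bl ≤ Al := by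
    rw [sub_smul, one_smul, show Al = Bl - (B - A) by simp only [Al, Bl]; abel]
    exact sub_le_sub_left hBA Bl
  have hBlAl : Bl ≤ (1 - beta)⁻¹ • Al :=
    calc Bl = (1 - beta)⁻¹ • ((1 - beta) • Bl) := (inv_smul_smul₀ hgap.ne' Bl).symm
      _ ≤ (1 - beta)⁻¹ • Al := smul_le_smul_of_nonneg_left hAl (inv_nonneg.2 hgap.le)
  have hSaBlSa : Sa * Bl * Sa ≤ algebraMap ℝ _ (1 - beta)⁻¹ := by
    simpa only [mul_smul_comm, smul_mul_assoc, mul_mul_eq_one_of_mul_self_mul_eq_one hSal hSar,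
      Algebra.algebraMap_eq_smul_one] using hSa.isSelfAdjoint.conjugate_le_conjugate hBlAl
  have hnorm : ‖Sa * Sb‖ ^ 2 ≤ (1 - beta)⁻¹ := by
    refine CStarAlgebra.sq_norm_le_of_mul_star_le_algebraMap (inv_nonneg.2 hgap.le) ?_
    rw [star_mul, hSa.isSelfAdjoint.star_eq, hSb.isSelfAdjoint.star_eq]
    simpa only [mul_assoc, ← hSb2] using hSaBlSa
  rw [← Real.sqrt_inv]
  exact Real.le_sqrt_of_sq_le hnorm

/-- If `β = λ_max((B+λI)^{-1/2}(B−A)(B+λI)^{-1/2}) < 1`, then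
`‖(A+λI)^{-1/2}(B+λI)^{1/2}‖ ≤ (1−β)^{-1/2}`. -/
theorem norm_invSqrt_mul_sqrt_le
    {H : Type*} [NormedAddCommGroup H] [InnerProductSpace ℂ H] [CompleteSpace H]
    (A B : H →L[ℂ] H) (hA : A.IsPositive) (hB : B.IsPositive)
    (lam : ℝ) (hlam : 0 < lam)
    -- `Sa = (A + λI)^{-1/2}`: positive, and `Sa²` inverts `A + λI`
    (Sa : H →L[ℂ] H) (hSa : Sa.IsPositive)
    (hSal : (Sa * Sa) * (A + (lam : ℂ) • 1) = 1)
    (hSar : (A + (lam : ℂ) • 1) * (Sa * Sa) = 1)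
    -- `Sb = (B + λI)^{1/2}`: positive square root
    (Sb : H →L[ℂ] H) (hSb : Sb.IsPositive)
    (hSb2 : Sb * Sb = B + (lam : ℂ) • 1)
    -- `T = (B + λI)^{-1/2}`: positive, and `T²` inverts `B + λI`
    (T : H →L[ℂ] H) (hT : T.IsPositive)
    (hTl : (T * T) * (B + (lam : ℂ) • 1) = 1)
    (hTr : (B + (lam : ℂ) • 1) * (T * T) = 1)
    (beta : ℝ) (hbeta : beta = sSup (spectrum ℝ (T * (B - A) * T)))
    (hbeta1 : beta < 1) :
    ‖Sa * Sb‖ ≤ (Real.sqrt (1 - beta))⁻¹ :=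
  norm_invSqrt_mul_sqrt_le_general A B hA hB lam Sa hSa hSal hSar Sb hSb hSb2 T hT hTl hTr beta
    hbeta hbeta1
end

section
/- (Cordes inequality) Let A, B be positive semidefinite bounded linear operators on a separable Hilbert space and 0 ≤ s ≤ 1. Then ‖A^s B^s‖ ≤ ‖AB‖^s. -/
/-!
For `0 ≤ a, b` in a C⋆-algebra, the function `f s = ‖a ^ s * b ^ s‖` satisfies
`f ((s + t) / 2) ^ 2 ≤ f s * f t`: writing `X = a ^ m * b ^ m` with `m = (s + t) / 2`,
`‖X‖ ^ 2 = ‖X⋆ X‖` is the spectral radius of the self-adjoint element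
`(b ^ m * a ^ s) * (a ^ t * b ^ m)`, which does not change when the two factors are swapped, and
the swapped product `(a ^ t * b ^ t) * (b ^ s * a ^ s)` has norm at most `f t * f s`.
Comparing with `s ↦ ‖a * b‖ ^ s`, for which this is an equality, gives `f s ≤ ‖a * b‖ ^ s` at
the dyadic points of `[0, 1]` by induction on the denominator, and then everywhere because `f` is
continuous on `(0, ∞)`.
-/

open ContinuousLinearMap

open Filter Set Topology
open scoped NNReal ENNReal

def IsMidpointLogConvexOn (S : Set ℝ) (f : ℝ → ℝ) : Prop :=
  ∀ s ∈ S, ∀ t ∈ S, f ((s + t) / 2) ^ 2 ≤ f s * f t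

namespace IsMidpointLogConvexOn

variable {f : ℝ → ℝ} {c : ℝ}

theorem le_rpow_midpoint (h : IsMidpointLogConvexOn (Ici 0) f) (hc : 0 ≤ c)
    (hf : ∀ s, 0 ≤ f s) {s t : ℝ} (hs : 0 ≤ s) (ht : 0 ≤ t) (hfs : f s ≤ c ^ s)
    (hft : f t ≤ c ^ t) : f ((s + t) / 2) ≤ c ^ ((s + t) / 2) := by
  refine le_of_pow_le_pow_left₀ two_ne_zero (by positivity) ?_
  calc f ((s + t) / 2) ^ 2 ≤ f s * f t := h s hs t ht
    _ ≤ c ^ s * c ^ t := mul_le_mul hfs hft (hf t) (by positivity)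
    _ = (c ^ ((s + t) / 2)) ^ 2 := by
      rw [← Real.rpow_add_of_nonneg hc hs ht, ← Real.rpow_mul_natCast hc]
      norm_num

theorem le_rpow_dyadic (h : IsMidpointLogConvexOn (Ici 0) f) (hc : 0 ≤ c)
    (hf : ∀ s, 0 ≤ f s) (hf0 : f 0 ≤ 1) (hf1 : f 1 ≤ c) (n k : ℕ) (hk : k ≤ 2 ^ n) :
    f (k / 2 ^ n) ≤ c ^ ((k : ℝ) / 2 ^ n) := by
  induction n generalizing k with
  | zero => interval_cases k <;> simpa
  | succ n ih =>
    rw [pow_succ] at hk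
    obtain ⟨j, rfl | rfl⟩ := Nat.even_or_odd' k
    · have hj : ((2 * j : ℕ) : ℝ) / 2 ^ (n + 1) = j / 2 ^ n := by
        push_cast; field_simp; ring
      rw [hj]
      exact ih j (by omega)
    · have hj : ((2 * j + 1 : ℕ) : ℝ) / 2 ^ (n + 1) =
          (j / 2 ^ n + ((j + 1 : ℕ) : ℝ) / 2 ^ n) / 2 := by
        push_cast; field_simp; ring
      rw [hj]
      exact h.le_rpow_midpoint hc hf (by positivity) (by positivity) (ih j (by omega))
        (ih (j + 1) (by omega))

theorem le_rpow (h : IsMidpointLogConvexOn (Ici 0) f) (hc : 0 ≤ c) (hf : ∀ s, 0 ≤ f s)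
    (hf0 : f 0 ≤ 1) (hf1 : f 1 ≤ c) (hcont : ContinuousOn f (Ioi 0)) {s : ℝ} (hs0 : 0 ≤ s)
    (hs1 : s ≤ 1) : f s ≤ c ^ s := by
  rcases hs0.eq_or_lt with rfl | hs
  · simpa using hf0
  set q : ℕ → ℝ := fun n => (⌊s * 2 ^ n⌋₊ : ℝ) / 2 ^ n
  have hq : Tendsto q atTop (𝓝 s) :=
    (tendsto_nat_floor_mul_div_atTop hs.le).comp (tendsto_pow_atTop_atTop_of_one_lt one_lt_two)
  have hfq : Tendsto (f ∘ q) atTop (𝓝 (f s)) :=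
    (hcont.continuousAt (Ioi_mem_nhds hs)).tendsto.comp hq
  have hcq : Tendsto (fun n => c ^ q n) atTop (𝓝 (c ^ s)) :=
    (Real.continuousAt_const_rpow' hs.ne').tendsto.comp hq
  refine le_of_tendsto_of_tendsto' hfq hcq fun n => ?_
  refine h.le_rpow_dyadic hc hf hf0 hf1 n _ (Nat.floor_le_of_le ?_)
  push_cast
  exact mul_le_of_le_one_left (by positivity) hs1

end IsMidpointLogConvexOn

theorem spectrum.spectralRadius_mul_comm {𝕜 A : Type*} [NormedField 𝕜] [Ring A] [Algebra 𝕜 A]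
    (a b : A) : spectralRadius 𝕜 (a * b) = spectralRadius 𝕜 (b * a) := by
  have key : ∀ x y : A, spectralRadius 𝕜 (x * y) ≤ spectralRadius 𝕜 (y * x) := by
    refine fun x y => iSup₂_le fun k hk => ?_
    rcases eq_or_ne k 0 with rfl | hk0
    · simp
    · have : k ∈ spectrum 𝕜 (y * x) \ {0} := spectrum.nonzero_mul_comm (𝕜 := 𝕜) x y ▸ ⟨hk, hk0⟩
      exact le_iSup₂ (f := fun k (_ : k ∈ spectrum 𝕜 (y * x)) => (‖k‖₊ : ℝ≥0∞)) k this.1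
  exact (key a b).antisymm (key b a)

theorem IsSelfAdjoint.norm_le_norm_mul_comm {A : Type*} [CStarAlgebra A] [Nontrivial A]
    {u v : A} (h : IsSelfAdjoint (u * v)) : ‖u * v‖ ≤ ‖v * u‖ := by
  have : (‖u * v‖₊ : ℝ≥0∞) ≤ ‖v * u‖₊ := by
    rw [← h.spectralRadius_eq_nnnorm, spectrum.spectralRadius_mul_comm]
    exact spectrum.spectralRadius_le_nnnorm _
  exact_mod_cast this

namespace CFC

section Rpow

variable {A : Type*} [PartialOrder A] [Ring A] [StarRing A] [TopologicalSpace A]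
  [StarOrderedRing A] [Algebra ℝ A] [ContinuousFunctionalCalculus ℝ A IsSelfAdjoint]
  [NonnegSpectrumClass ℝ A]

theorem rpow_add_of_nonneg {a : A} (ha : 0 ≤ a) {x y : ℝ} (hx : 0 ≤ x) (hy : 0 ≤ y) :
    a ^ (x + y) = a ^ x * a ^ y := by
  rcases hx.eq_or_lt with rfl | hx'
  · simp [rpow_zero a ha]
  rw [rpow_def, rpow_def, rpow_def, ← cfc_mul (fun z : ℝ≥0 => z ^ x) (fun z : ℝ≥0 => z ^ y) a
      (NNReal.continuous_rpow_const hx).continuousOn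
      (NNReal.continuous_rpow_const hy).continuousOn]
  exact cfc_congr fun z _ => NNReal.rpow_add' (by positivity) z

open scoped ContinuousFunctionalCalculus in
theorem continuousOn_const_rpow (a : A) : ContinuousOn (fun y : ℝ => a ^ y) (Ioi 0) := by
  intro y hy
  refine (continuousAt_cfc_fun (R := ℝ≥0) (f := fun y (x : ℝ≥0) => x ^ y) ?_ ?_).continuousWithinAt
  · rw [tendstoUniformlyOn_iff_restrict]
    refine ContinuousOn.tendstoUniformly (Ioi_mem_nhds hy) fun p hp => ?_
    exact (ContinuousAt.comp (f := fun q : ℝ × spectrum ℝ≥0 a => ((q.2 : ℝ≥0), q.1))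
      (NNReal.continuousAt_rpow (Or.inr hp.1)) (by fun_prop)).continuousWithinAt
  · filter_upwards [Ioi_mem_nhds hy] with z hz
    exact (NNReal.continuous_rpow_const hz.le).continuousOn

end Rpow

variable {A : Type*} [CStarAlgebra A] [PartialOrder A] [StarOrderedRing A]

theorem isMidpointLogConvexOn_norm_rpow_mul_rpow [Nontrivial A] {a b : A} (ha : 0 ≤ a)
    (hb : 0 ≤ b) : IsMidpointLogConvexOn (Ici 0) fun s => ‖a ^ s * b ^ s‖ := by
  intro s (hs : 0 ≤ s) t (ht : 0 ≤ t)
  set m := (s + t) / 2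
  have hm : 0 ≤ m := by positivity
  have star_rpow : ∀ (c : A) (r : ℝ), star (c ^ r) = c ^ r := fun c r =>
    (IsSelfAdjoint.of_nonneg rpow_nonneg).star_eq
  have hb2 : b ^ m * b ^ m = b ^ t * b ^ s := by
    rw [← rpow_add_of_nonneg hb hm hm, ← rpow_add_of_nonneg hb ht hs]
    congr 1
    ring
  have hX : star (a ^ m * b ^ m) * (a ^ m * b ^ m) = (b ^ m * a ^ s) * (a ^ t * b ^ m) := by
    rw [star_mul, star_rpow, star_rpow, mul_assoc, ← mul_assoc (a ^ m),
      ← rpow_add_of_nonneg ha hm hm, show m + m = s + t by ring, rpow_add_of_nonneg ha hs ht]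
    simp only [mul_assoc]
  have hsa : IsSelfAdjoint ((b ^ m * a ^ s) * (a ^ t * b ^ m)) :=
    hX ▸ IsSelfAdjoint.star_mul_self _
  calc ‖a ^ m * b ^ m‖ ^ 2 = ‖(b ^ m * a ^ s) * (a ^ t * b ^ m)‖ := by
        rw [← hX, CStarRing.norm_star_mul_self, sq]
    _ ≤ ‖(a ^ t * b ^ m) * (b ^ m * a ^ s)‖ := hsa.norm_le_norm_mul_comm
    _ = ‖(a ^ t * b ^ t) * (b ^ s * a ^ s)‖ := by
        rw [mul_assoc, ← mul_assoc (b ^ m), hb2]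
        simp only [mul_assoc]
    _ ≤ ‖a ^ t * b ^ t‖ * ‖b ^ s * a ^ s‖ := norm_mul_le _ _
    _ = ‖a ^ s * b ^ s‖ * ‖a ^ t * b ^ t‖ := by
        rw [mul_comm, ← norm_star (b ^ s * a ^ s), star_mul, star_rpow, star_rpow]

theorem norm_rpow_mul_rpow_le {a b : A} (ha : 0 ≤ a) (hb : 0 ≤ b) {s : ℝ} (hs0 : 0 ≤ s)
    (hs1 : s ≤ 1) : ‖a ^ s * b ^ s‖ ≤ ‖a * b‖ ^ s := by
  cases subsingleton_or_nontrivial A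
  · simp [Subsingleton.elim (a ^ s * b ^ s) 0, Real.rpow_nonneg (norm_nonneg _)]
  refine (isMidpointLogConvexOn_norm_rpow_mul_rpow ha hb).le_rpow (norm_nonneg _)
    (fun _ => norm_nonneg _) ?_ ?_ ?_ hs0 hs1
  · simp [rpow_zero a ha, rpow_zero b hb]
  · simp [rpow_one a ha, rpow_one b hb]
  · exact ((continuousOn_const_rpow a).mul (continuousOn_const_rpow b)).norm

end CFC

/-- Cordes inequality: `‖A^s B^s‖ ≤ ‖AB‖^s` for positive semidefinite bounded operators
`A, B` and `0 ≤ s ≤ 1`. -/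
theorem cordes_inequality
    {H : Type*} [NormedAddCommGroup H] [InnerProductSpace ℂ H] [CompleteSpace H]
    (A B : H →L[ℂ] H) (hA : A.IsPositive) (hB : B.IsPositive)
    (s : ℝ) (hs0 : 0 ≤ s) (hs1 : s ≤ 1) :
    ‖CFC.rpow A s * CFC.rpow B s‖ ≤ ‖A * B‖ ^ s :=
  CFC.norm_rpow_mul_rpow_le ((nonneg_iff_isPositive A).mpr hA) ((nonneg_iff_isPositive B).mpr hB)
    hs0 hs1
end
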